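/- arXiv:2301.13579 — 2 statements merged into one kernel-verified Lean document; each statement's English description precedes it below -/
import Mathlib

section
/- Let K = ℂ(x₁,…,x_m) and let N be a difference module over K that is finite-dimensional as a K-vector space and simple. Then the ℂ-vector space of endomorphisms of N has dimension 1; equivalently, every endomorphism of N is a complex scalar multiple of the identity map. -/
/-!
An endomorphism `φ` commutes with the `τ_j`-semilinear bijections `Σ_j`, so its minimal
polynomial over `K` is carried to itself by each `τ_j`, i.e. its coefficients are shift
invariant. A rational function `p / q` invariant under all unit shifts is constant: for `z` with
`q(z) ≠ 0`, the polynomial `q(z) p - p(z) q` vanishes on `z + ℕ^m`. So the minimal polynomial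
comes from `ℂ[X]` and has a root `c ∈ ℂ`. Since `τ_j` fixes `c`, the eigenspace of `c` is a
nonzero subspace stable under all `Σ_j^{±1}`, hence all of `N`.
-/

noncomputable section

/-- The ℂ-algebra automorphism of ℂ[x₁,…,x_m] substituting x_j ↦ x_j + c_j. -/
def shiftPolyEquiv (m : ℕ) (c : Fin m → ℂ) :
    MvPolynomial (Fin m) ℂ ≃ₐ[ℂ] MvPolynomial (Fin m) ℂ :=
  AlgEquiv.ofAlgHom
    (MvPolynomial.aeval fun j => MvPolynomial.X j + MvPolynomial.C (c j))
    (MvPolynomial.aeval fun j => MvPolynomial.X j - MvPolynomial.C (c j))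
    (by apply MvPolynomial.algHom_ext; intro j; simp)
    (by apply MvPolynomial.algHom_ext; intro j; simp)

/-- The rational function field K = ℂ(x₁,…,x_m). -/
abbrev Kfield (m : ℕ) : Type := FractionRing (MvPolynomial (Fin m) ℂ)

/-- The shift automorphism τ_j : x_j ↦ x_j + 1 of K = ℂ(x₁,…,x_m). -/
def tau (m : ℕ) (j : Fin m) : Kfield m ≃+* Kfield m :=
  IsFractionRing.ringEquivOfRingEquiv (shiftPolyEquiv m (Pi.single j 1)).toRingEquiv

open MvPolynomial

lemma shiftPolyEquiv_add (m : ℕ) (c d : Fin m → ℂ) (p : MvPolynomial (Fin m) ℂ) :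
    shiftPolyEquiv m (c + d) p = shiftPolyEquiv m c (shiftPolyEquiv m d p) := by
  have h : (shiftPolyEquiv m (c + d)).toAlgHom =
      (shiftPolyEquiv m c).toAlgHom.comp (shiftPolyEquiv m d).toAlgHom := by
    apply MvPolynomial.algHom_ext
    intro j
    simp [shiftPolyEquiv, add_assoc, add_comm (C (c j))]
  exact DFunLike.congr_fun h p

lemma shiftPolyEquiv_zero (m : ℕ) (p : MvPolynomial (Fin m) ℂ) :
    shiftPolyEquiv m 0 p = p := by
  have h : (shiftPolyEquiv m 0).toAlgHom = AlgHom.id ℂ _ := by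
    apply MvPolynomial.algHom_ext
    intro j
    simp [shiftPolyEquiv]
  exact DFunLike.congr_fun h p

lemma eval_shiftPolyEquiv (m : ℕ) (c x : Fin m → ℂ) (p : MvPolynomial (Fin m) ℂ) :
    eval x (shiftPolyEquiv m c p) = eval (x + c) p := by
  have h : (aeval x).comp (shiftPolyEquiv m c).toAlgHom = aeval (x + c) := by
    apply MvPolynomial.algHom_ext
    intro j
    simp [shiftPolyEquiv]
  simpa using DFunLike.congr_fun h p

-- `tau m j` is definitionally `shiftK m (Pi.single j 1)`.
def shiftK (m : ℕ) (c : Fin m → ℂ) : Kfield m ≃+* Kfield m :=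
  IsFractionRing.ringEquivOfRingEquiv (shiftPolyEquiv m c).toRingEquiv

lemma shiftK_algebraMap (m : ℕ) (c : Fin m → ℂ) (p : MvPolynomial (Fin m) ℂ) :
    shiftK m c (algebraMap _ (Kfield m) p) = algebraMap _ (Kfield m) (shiftPolyEquiv m c p) :=
  IsFractionRing.ringEquivOfRingEquiv_algebraMap _ p

lemma shiftK_add (m : ℕ) (c d : Fin m → ℂ) (a : Kfield m) :
    shiftK m (c + d) a = shiftK m c (shiftK m d a) := by
  have h : (shiftK m (c + d) : Kfield m →+* Kfield m) =
      (shiftK m c : Kfield m →+* Kfield m).comp (shiftK m d) :=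
    IsFractionRing.ringHom_ext (A := MvPolynomial (Fin m) ℂ) fun p => by
      simp [shiftK_algebraMap, shiftPolyEquiv_add]
  exact DFunLike.congr_fun h a

lemma shiftK_zero (m : ℕ) (a : Kfield m) : shiftK m 0 a = a := by
  have h : (shiftK m 0 : Kfield m →+* Kfield m) = RingHom.id _ :=
    IsFractionRing.ringHom_ext (A := MvPolynomial (Fin m) ℂ) fun p => by
      simp [shiftK_algebraMap, shiftPolyEquiv_zero]
  exact DFunLike.congr_fun h a

lemma shiftK_algebraMap_C (m : ℕ) (d : Fin m → ℂ) (c : ℂ) :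
    shiftK m d (algebraMap (MvPolynomial (Fin m) ℂ) (Kfield m) (C c)) =
      algebraMap (MvPolynomial (Fin m) ℂ) (Kfield m) (C c) := by
  rw [shiftK_algebraMap, ← MvPolynomial.algebraMap_eq, AlgEquiv.commutes]

lemma shiftK_natCast_eq_self {m : ℕ} {a : Kfield m} (ha : ∀ j, tau m j a = a) (v : Fin m → ℕ) :
    shiftK m (fun j => (v j : ℂ)) a = a := by
  let H : AddSubmonoid (Fin m → ℂ) :=
    { carrier := {c | shiftK m c a = a}
      add_mem' := fun {c d} hc hd => by
        simp only [Set.mem_ofPred_eq] at *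
        rw [shiftK_add, hd, hc]
      zero_mem' := shiftK_zero m a }
  have hv : (fun j => (v j : ℂ)) = ∑ j, v j • Pi.single j (1 : ℂ) := by
    ext i
    simp [Finset.sum_apply, Pi.single_apply]
  change _ ∈ H
  rw [hv]
  exact sum_mem fun j _ => nsmul_mem (ha j) _

lemma eq_algebraMap_C_of_forall_tau_eq {m : ℕ} {a : Kfield m} (ha : ∀ j, tau m j a = a) :
    ∃ c : ℂ, a = algebraMap (MvPolynomial (Fin m) ℂ) (Kfield m) (C c) := by
  obtain ⟨p, q, hq, rfl⟩ := IsFractionRing.div_surjective (A := MvPolynomial (Fin m) ℂ) a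
  have hqK : algebraMap _ (Kfield m) q ≠ 0 := IsFractionRing.to_map_ne_zero_of_mem_nonZeroDivisors hq
  have hshift (v : Fin m → ℕ) :
      shiftPolyEquiv m (fun j => v j) p * q = p * shiftPolyEquiv m (fun j => v j) q := by
    have h := shiftK_natCast_eq_self ha v
    have hqK' : algebraMap _ (Kfield m) (shiftPolyEquiv m (fun j => v j) q) ≠ 0 := by
      rw [← shiftK_algebraMap]
      exact (map_ne_zero _).mpr hqK
    rw [map_div₀, shiftK_algebraMap, shiftK_algebraMap, div_eq_div_iff hqK' hqK,
      ← map_mul, ← map_mul] at h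
    exact IsFractionRing.injective _ (Kfield m) h
  obtain ⟨z, hz⟩ : ∃ z, eval z q ≠ 0 := by
    by_contra! h
    exact nonZeroDivisors.ne_zero hq (MvPolynomial.funext fun x => by simp [h x])
  refine ⟨eval z p / eval z q, ?_⟩
  -- `p - c q` vanishes on the lattice `z + ℕ^m`, which is Zariski dense
  have hpq : p = C (eval z p / eval z q) * q := by
    refine MvPolynomial.funext_set (fun i => Set.range fun n : ℕ => z i + n)
      (fun i => Set.infinite_range_of_injective ((add_right_injective _).comp Nat.cast_injective))
      fun x hx => ?_
    choose v hv using fun i => hx i (Set.mem_univ i)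
    obtain rfl : x = z + fun j => (v j : ℂ) := funext fun i => (hv i).symm
    have h := congrArg (eval z) (hshift v)
    rw [map_mul, map_mul, eval_shiftPolyEquiv, eval_shiftPolyEquiv] at h
    rw [eval_mul, eval_C]
    field_simp
    linear_combination h
  conv_lhs => rw [hpq, map_mul, mul_div_assoc, div_self hqK, mul_one]

section Semilinear

open Polynomial

variable {K V : Type*} [Field K] [AddCommGroup V] [Module K V]

lemma apply_aeval_eq_aeval_map_apply {σ : K →+* K} (S : V →ₛₗ[σ] V) {φ : Module.End K V}
    (hφ : ∀ v, φ (S v) = S (φ v)) (p : K[X]) (v : V) :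
    S (aeval φ p v) = aeval φ (p.map σ) (S v) := by
  induction p using Polynomial.induction_on' with
  | add p q hp hq => simp only [map_add, Polynomial.map_add, LinearMap.add_apply, hp, hq]
  | monomial n a =>
    simp only [Polynomial.aeval_monomial, Polynomial.map_monomial, Module.End.mul_apply,
      Module.algebraMap_end_apply, LinearMap.map_smulₛₗ, Module.End.pow_apply]
    rw [(Function.Commute.iterate_left hφ n) v]

lemma minpoly_map_eq_of_semilinear_comm [FiniteDimensional K V] {σ : K →+* K} (S : V →ₛₗ[σ] V)
    (hS : Function.Surjective S) {φ : Module.End K V} (hφ : ∀ v, φ (S v) = S (φ v)) :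
    (minpoly K φ).map σ = minpoly K φ := by
  have hmonic := minpoly.monic (Algebra.IsIntegral.isIntegral (R := K) φ)
  refine eq_of_monic_of_dvd_of_natDegree_le hmonic (hmonic.map σ) (minpoly.dvd K φ ?_) ?_
  · ext w
    obtain ⟨v, rfl⟩ := hS w
    rw [← apply_aeval_eq_aeval_map_apply S hφ, minpoly.aeval, LinearMap.zero_apply, map_zero,
      LinearMap.zero_apply]
  · rw [natDegree_map]

lemma semilinear_apply_mem_eigenspace_iff {σ : K →+* K} (S : V →ₛₗ[σ] V)
    (hS : Function.Injective S) {φ : Module.End K V} (hφ : ∀ v, φ (S v) = S (φ v)) {μ : K}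
    (hμ : σ μ = μ) {v : V} : S v ∈ φ.eigenspace μ ↔ v ∈ φ.eigenspace μ := by
  simp only [Module.End.mem_eigenspace_iff]
  rw [hφ, ← hμ, ← LinearMap.map_smulₛₗ, hS.eq_iff, hμ]

lemma exists_hasEigenvalue_of_minpoly_mem_lifts {k : Type*} [Field k] [IsAlgClosed k]
    [FiniteDimensional K V] [Nontrivial V] (g : k →+* K) {φ : Module.End K V}
    (h : minpoly K φ ∈ lifts g) : ∃ c, φ.HasEigenvalue (g c) := by
  obtain ⟨q, hq⟩ := (mem_lifts _).mp h
  have hdeg : q.degree ≠ 0 := by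
    have := minpoly.natDegree_pos (Algebra.IsIntegral.isIntegral (R := K) φ)
    rw [← hq, natDegree_map] at this
    exact (natDegree_pos_iff_degree_pos.mp this).ne'
  obtain ⟨c, hc⟩ := IsAlgClosed.exists_root q hdeg
  exact ⟨c, Module.End.hasEigenvalue_iff_isRoot.mpr (hq ▸ hc.map)⟩

end Semilinear

theorem stmt3_general (m : ℕ) (N : Type) [AddCommGroup N] [Module (Kfield m) N]
    [FiniteDimensional (Kfield m) N]
    (S T : Fin m → N → N)
    (hinv : ∀ j, Function.LeftInverse (T j) (S j) ∧ Function.RightInverse (T j) (S j))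
    (hadd : ∀ j u v, S j (u + v) = S j u + S j v)
    (hsmul : ∀ j (a : Kfield m) v, S j (a • v) = (tau m j a) • S j v)
    (hnz : Nontrivial N)
    (hsimple : ∀ W : Submodule (Kfield m) N,
      (∀ j, ∀ v ∈ W, S j v ∈ W) → (∀ j, ∀ v ∈ W, T j v ∈ W) → W = ⊥ ∨ W = ⊤)
    (φ : N →ₗ[Kfield m] N) (hφ : ∀ j v, φ (S j v) = S j (φ v)) :
    ∃ c : ℂ, ∀ v : N,
      φ v = algebraMap (MvPolynomial (Fin m) ℂ) (Kfield m) (MvPolynomial.C c) • v := by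
  let Sₗ (j : Fin m) : N →ₛₗ[(tau m j : Kfield m →+* Kfield m)] N :=
    { toFun := S j, map_add' := hadd j, map_smul' := hsmul j }
  have hmin (j : Fin m) : (minpoly (Kfield m) φ).map (tau m j : Kfield m →+* Kfield m) =
      minpoly (Kfield m) φ :=
    minpoly_map_eq_of_semilinear_comm (Sₗ j) (hinv j).2.surjective (hφ j)
  have hlifts : minpoly (Kfield m) φ ∈
      Polynomial.lifts ((algebraMap (MvPolynomial (Fin m) ℂ) (Kfield m)).comp C) := by
    refine Polynomial.lifts_iff_coeff_lifts _ |>.mpr fun n => ?_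
    obtain ⟨c, hc⟩ := eq_algebraMap_C_of_forall_tau_eq fun j => by
      simpa using congr(Polynomial.coeff $(hmin j) n)
    exact ⟨c, hc.symm⟩
  obtain ⟨c, hc⟩ := exists_hasEigenvalue_of_minpoly_mem_lifts _ hlifts
  have hinvariant (j : Fin m) (v : N) :
      S j v ∈ Module.End.eigenspace φ (algebraMap _ _ (C c)) ↔
        v ∈ Module.End.eigenspace φ (algebraMap _ _ (C c)) :=
    semilinear_apply_mem_eigenspace_iff (Sₗ j) (hinv j).1.injective (hφ j)
      (shiftK_algebraMap_C m (Pi.single j 1) c)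
  have htop : Module.End.eigenspace φ (algebraMap _ _ (C c)) = ⊤ :=
    (hsimple _ (fun j v => (hinvariant j v).mpr)
      (fun j v hv => (hinvariant j (T j v)).mp (by rwa [(hinv j).2 v]))).resolve_left
      (Module.End.hasEigenvalue_iff.mp hc)
  exact ⟨c, fun v => Module.End.mem_eigenspace_iff.mp (htop ▸ Submodule.mem_top)⟩

theorem stmt3 (m : ℕ) (N : Type) [AddCommGroup N] [Module (Kfield m) N]
    [FiniteDimensional (Kfield m) N]
    (S T : Fin m → N → N)
    (hinv : ∀ j, Function.LeftInverse (T j) (S j) ∧ Function.RightInverse (T j) (S j))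
    (hadd : ∀ j u v, S j (u + v) = S j u + S j v)
    (hsmul : ∀ j (a : Kfield m) v, S j (a • v) = (tau m j a) • S j v)
    (hcomm : ∀ j j' v, S j (S j' v) = S j' (S j v))
    (hnz : Nontrivial N)
    (hsimple : ∀ W : Submodule (Kfield m) N,
      (∀ j, ∀ v ∈ W, S j v ∈ W) → (∀ j, ∀ v ∈ W, T j v ∈ W) → W = ⊥ ∨ W = ⊤)
    (φ : N →ₗ[Kfield m] N) (hφ : ∀ j v, φ (S j v) = S j (φ v)) :
    ∃ c : ℂ, ∀ v : N,
      φ v = algebraMap (MvPolynomial (Fin m) ℂ) (Kfield m) (MvPolynomial.C c) • v :=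
  stmt3_general m N S T hinv hadd hsmul hnz hsimple φ hφ

end
end

section
/- The reduction-modulo-δ map O(X_{K[[δ]]}) → O(X_K) (setting δ = 0 in all coefficients) induces a K-linear isomorphism O(X_{K[[δ]]}) / (V_{K[[δ]]} + δ·O(X_{K[[δ]]})) ≅ O(X_K)/I_K. In other words, the limit lim_{δ→0} Hⁿ(X_δ, ω_δ) of the top twisted de Rham cohomology is the likelihood quotient O(X_K)/I_K. -/
set_option maxHeartbeats 1000000
set_option synthInstance.maxHeartbeats 400000

noncomputable section

open MvPolynomial

/-- The polynomial ring ℂ[s₁,…,s_ℓ,ν₁,…,νₙ]. -/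
abbrev PRing (l n : ℕ) : Type := MvPolynomial (Fin l ⊕ Fin n) ℂ

/-- The rational function field K = ℂ(s₁,…,s_ℓ,ν₁,…,νₙ). -/
abbrev KK (l n : ℕ) : Type := FractionRing (PRing l n)

/-- The generator s_i of K. -/
def sGen (l n : ℕ) (i : Fin l) : KK l n :=
  algebraMap (PRing l n) (KK l n) (X (Sum.inl i))

/-- The generator ν_j of K. -/
def nuGen (l n : ℕ) (j : Fin n) : KK l n :=
  algebraMap (PRing l n) (KK l n) (X (Sum.inr j))

/-- The Laurent polynomial ring A[x₁^{±1},…,xₙ^{±1}]. -/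
abbrev Laur (n : ℕ) (A : Type) [CommRing A] : Type :=
  AddMonoidAlgebra A (Fin n → ℤ)

/-- The Laurent monomial x^b. -/
def lmono {n : ℕ} {A : Type} [CommRing A] (b : Fin n → ℤ) : Laur n A :=
  AddMonoidAlgebra.single b 1

/-- The partial derivative ∂/∂x_j of a Laurent polynomial. -/
def lpderiv {n : ℕ} {A : Type} [CommRing A] (j : Fin n) (f : Laur n A) : Laur n A :=
  Finsupp.sum f.coeff fun m c => AddMonoidAlgebra.single (m - Pi.single j 1) ((m j : A) * c)

/-- Coefficientwise map of Laurent polynomial rings along a ring homomorphism. -/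
def laurMap {n : ℕ} {A B : Type} [CommRing A] [CommRing B] (φ : A →+* B) :
    Laur n A →+* Laur n B where
  toFun g := AddMonoidAlgebra.ofCoeff (Finsupp.mapRange φ φ.map_zero g.coeff)
  map_one' := (AddMonoidAlgebra.mapRingHom (Fin n → ℤ) φ).map_one'
  map_mul' := (AddMonoidAlgebra.mapRingHom (Fin n → ℤ) φ).map_mul'
  map_zero' := (AddMonoidAlgebra.mapRingHom (Fin n → ℤ) φ).map_zero'
  map_add' := (AddMonoidAlgebra.mapRingHom (Fin n → ℤ) φ).map_add'

end

noncomputable section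
/-- The inclusion ℂ → K. -/
def cC (l n : ℕ) : ℂ →+* KK l n := (algebraMap (PRing l n) (KK l n)).comp MvPolynomial.C

/-- The coefficient map ℂ → A obtained from κ : K → A. -/
def cmap {l n : ℕ} {A : Type} [CommRing A] (κ : KK l n →+* A) : ℂ →+* A :=
  κ.comp (cC l n)

/-- The image of the Laurent polynomial f_i in A[x^{±1}]. -/
def fImg {l n : ℕ} (f : Fin l → Laur n ℂ) {A : Type} [CommRing A] (κ : KK l n →+* A)
    (i : Fin l) : Laur n A := laurMap (cmap κ) (f i)

/-- The product f₁ ⋯ f_ℓ in A[x^{±1}]. -/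
def FProd {l n : ℕ} (f : Fin l → Laur n ℂ) {A : Type} [CommRing A] (κ : KK l n →+* A) :
    Laur n A := ∏ i, fImg f κ i

/-- O(X_A) = A[x₁^{±1},…,xₙ^{±1}] localized at f₁⋯f_ℓ. -/
abbrev OX {l n : ℕ} (f : Fin l → Laur n ℂ) {A : Type} [CommRing A] (κ : KK l n →+* A) :
    Type := Localization.Away (FProd f κ)

end

noncomputable section

/-- x_j as a unit of O(X_A). -/
def xU {l n : ℕ} (f : Fin l → Laur n ℂ) {A : Type} [CommRing A] (κ : KK l n →+* A)
    (j : Fin n) : (OX f κ)ˣ where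
  val := algebraMap (Laur n A) (OX f κ) (lmono (Pi.single j 1))
  inv := algebraMap (Laur n A) (OX f κ) (lmono (-Pi.single j 1))
  val_inv := by
    rw [← map_mul]
    simp only [lmono, AddMonoidAlgebra.single_mul_single, add_neg_cancel, one_mul]
    rw [← AddMonoidAlgebra.one_def, map_one]
  inv_val := by
    rw [← map_mul]
    simp only [lmono, AddMonoidAlgebra.single_mul_single, neg_add_cancel, one_mul]
    rw [← AddMonoidAlgebra.one_def, map_one]

lemma fImg_isUnit {l n : ℕ} (f : Fin l → Laur n ℂ) {A : Type} [CommRing A]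
    (κ : KK l n →+* A) (i : Fin l) :
    IsUnit (algebraMap (Laur n A) (OX f κ) (fImg f κ i)) := by
  have h : fImg f κ i ∣ FProd f κ := Finset.dvd_prod_of_mem _ (Finset.mem_univ i)
  exact IsLocalization.Away.isUnit_of_dvd (x := FProd f κ) (S := OX f κ) h

/-- f_i as a unit of O(X_A). -/
def fU {l n : ℕ} (f : Fin l → Laur n ℂ) {A : Type} [CommRing A] (κ : KK l n →+* A)
    (i : Fin l) : (OX f κ)ˣ := (fImg_isUnit f κ i).unit

/-- f^a = f₁^{a₁} ⋯ f_ℓ^{a_ℓ} for an integer vector a. -/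
def fpow {l n : ℕ} (f : Fin l → Laur n ℂ) {A : Type} [CommRing A] (κ : KK l n →+* A)
    (a : Fin l → ℤ) : OX f κ := ↑(∏ i, (fU f κ i) ^ (a i))

end

noncomputable section
/-- The element
v_{a,b,j} = x₁⋯xₙ · f^a · x^b · ((ν_j + δ b_j) x_j^{-1} - Σ_i (s_i - δ a_i) f_i^{-1} ∂f_i/∂x_j)
of O(X_A). -/
def vElt {l n : ℕ} (f : Fin l → Laur n ℂ) {A : Type} [CommRing A] (κ : KK l n →+* A)
    (δ : A) (a : Fin l → ℤ) (b : Fin n → ℤ) (j : Fin n) : OX f κ :=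
  algebraMap (Laur n A) (OX f κ) (lmono fun _ => 1) * fpow f κ a *
    algebraMap (Laur n A) (OX f κ) (lmono b) *
    (algebraMap A (OX f κ) (κ (nuGen l n j) + δ * (b j : A)) * ↑(xU f κ j)⁻¹ -
      ∑ i : Fin l, algebraMap A (OX f κ) (κ (sGen l n i) - δ * (a i : A)) *
        (↑(fU f κ i)⁻¹ * algebraMap (Laur n A) (OX f κ) (lpderiv j (fImg f κ i))))

/-- The A-submodule V_A ⊆ O(X_A) spanned by the elements v_{a,b,j}. -/
def VA {l n : ℕ} (f : Fin l → Laur n ℂ) {A : Type} [CommRing A] (κ : KK l n →+* A)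
    (δ : A) : Submodule A (OX f κ) :=
  Submodule.span A {g | ∃ a b j, g = vElt f κ δ a b j}

/-- The generator w_j = ν_j x_j^{-1} - Σ_i s_i f_i^{-1} ∂f_i/∂x_j of the
likelihood ideal, in O(X_K). -/
def wElt {l n : ℕ} (f : Fin l → Laur n ℂ) (j : Fin n) :
    OX f (RingHom.id (KK l n)) :=
  algebraMap (KK l n) (OX f (RingHom.id (KK l n))) (nuGen l n j) *
      ↑(xU f (RingHom.id (KK l n)) j)⁻¹ -
    ∑ i : Fin l, algebraMap (KK l n) (OX f (RingHom.id (KK l n))) (sGen l n i) *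
      (↑(fU f (RingHom.id (KK l n)) i)⁻¹ *
        algebraMap (Laur n (KK l n)) (OX f (RingHom.id (KK l n)))
          (lpderiv j (fImg f (RingHom.id (KK l n)) i)))

/-- The likelihood ideal I_K ⊆ O(X_K). -/
def likeIdeal {l n : ℕ} (f : Fin l → Laur n ℂ) : Ideal (OX f (RingHom.id (KK l n))) :=
  Ideal.span {g | ∃ j, g = wElt f j}
end

noncomputable section
/-- The generators (s₁,…,s_ℓ,ν₁,…,νₙ) of K. -/
def genK (l n : ℕ) : (Fin l ⊕ Fin n) → KK l n := Sum.elim (sGen l n) (nuGen l n)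

lemma laurMap_comp_apply {n : ℕ} {A B C : Type} [CommRing A] [CommRing B] [CommRing C]
    (θ : B →+* C) (φ : A →+* B) (g : Laur n A) :
    laurMap θ (laurMap φ g) = laurMap (θ.comp φ) g := by
  show AddMonoidAlgebra.ofCoeff (Finsupp.mapRange θ θ.map_zero (Finsupp.mapRange φ φ.map_zero g.coeff)) = _
  rw [← Finsupp.mapRange_comp (h := by simp)]
  rfl

lemma laurMap_FProd {l n : ℕ} (f : Fin l → Laur n ℂ) {A B : Type} [CommRing A] [CommRing B]
    (κ₁ : KK l n →+* A) (κ₂ : KK l n →+* B) (θ : A →+* B)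
    (hθ : θ.comp (cmap κ₁) = cmap κ₂) :
    laurMap θ (FProd f κ₁) = FProd f κ₂ := by
  rw [FProd, map_prod]
  refine Finset.prod_congr rfl fun i _ => ?_
  show laurMap θ (laurMap (cmap κ₁) (f i)) = laurMap (cmap κ₂) (f i)
  rw [laurMap_comp_apply, hθ]

/-- The coefficientwise ring homomorphism O(X_A) → O(X_B) induced by a ring
homomorphism θ : A → B compatible with the coefficient maps. -/
def OXmap {l n : ℕ} (f : Fin l → Laur n ℂ) {A B : Type} [CommRing A] [CommRing B]
    (κ₁ : KK l n →+* A) (κ₂ : KK l n →+* B) (θ : A →+* B)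
    (hθ : θ.comp (cmap κ₁) = cmap κ₂) : OX f κ₁ →+* OX f κ₂ :=
  Localization.awayLift ((algebraMap (Laur n B) (OX f κ₂)).comp (laurMap θ)) (FProd f κ₁)
    (by
      rw [RingHom.comp_apply, laurMap_FProd f κ₁ κ₂ θ hθ]
      exact IsLocalization.Away.algebraMap_isUnit _)
end

noncomputable section

/-- O(X_K), the case A = K, δ = 1. -/
abbrev OXK {l n : ℕ} (f : Fin l → Laur n ℂ) : Type := OX f (RingHom.id (KK l n))

/-- The formal power series ring K[[δ]]. -/
abbrev PS (l n : ℕ) : Type := PowerSeries (KK l n)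

/-- O(X_{K[[δ]]}). -/
abbrev OXd {l n : ℕ} (f : Fin l → Laur n ℂ) : Type := OX f (PowerSeries.C (R := KK l n))

/-- V_{K[[δ]]} ⊆ O(X_{K[[δ]]}), with δ the power series variable. -/
def Vd {l n : ℕ} (f : Fin l → Laur n ℂ) : Submodule (PS l n) (OXd f) :=
  VA f (PowerSeries.C (R := KK l n)) PowerSeries.X

lemma redCompat (l n : ℕ) :
    (PowerSeries.constantCoeff (R := KK l n)).comp (cmap (PowerSeries.C (R := KK l n))) =
      cmap (RingHom.id (KK l n)) :=
  RingHom.ext fun c => by simp [cmap, cC]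

/-- The reduction map O(X_{K[[δ]]}) → O(X_K) setting δ = 0 in all coefficients. -/
def red {l n : ℕ} (f : Fin l → Laur n ℂ) : OXd f →+* OXK f :=
  OXmap f (PowerSeries.C (R := KK l n)) (RingHom.id (KK l n))
    (PowerSeries.constantCoeff (R := KK l n)) (redCompat l n)

/-- The submodule δ·O(X_{K[[δ]]}). -/
def deltaMod {l n : ℕ} (f : Fin l → Laur n ℂ) : Submodule (PS l n) (OXd f) :=
  Submodule.span (PS l n)
    {g | ∃ h, g = algebraMap (PS l n) (OXd f) PowerSeries.X * h}

/-!
Reduction modulo `δ` is induced by the constant-coefficient map `K[[δ]] → K`, which has the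
section `K → K[[δ]]`, so it is surjective. Its kernel is `δ · O(X_{K[[δ]]})`: if `x / F^k`
(with `F = f₁⋯f_ℓ`) reduces to zero, then `F^j x` reduces to zero in `K[x^{±1}]` for some `j`,
so all coefficients of `F^j x` are divisible by `δ`. Setting `δ = 0` sends `v_{a,b,j}` to
`x₁⋯xₙ f^a x^b · w_j`, and these monomials span `O(X_K)` over `K`; hence the image of
`V_{K[[δ]]}` is the `K`-span of all `O(X_K)`-multiples of the `w_j`, which is `I_K`. Finally
`red g ∈ red(V)` iff `g ∈ V + ker red`.
-/

open AddMonoidAlgebra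

section Laurent

variable {n : ℕ} {A B : Type} [CommRing A] [CommRing B]

lemma laurMap_eq_mapRingHom (φ : A →+* B) : laurMap (n := n) φ = mapRingHom _ φ :=
  RingHom.ext fun _ => rfl

@[simp]
lemma laurMap_single (φ : A →+* B) (m : Fin n → ℤ) (c : A) :
    laurMap φ (single m c) = single m (φ c) := by
  rw [laurMap_eq_mapRingHom, mapRingHom_single]

@[simp]
lemma laurMap_lmono (φ : A →+* B) (b : Fin n → ℤ) : laurMap φ (lmono b) = lmono b := by
  rw [lmono, laurMap_single, map_one, lmono]

@[simp]
lemma laurMap_id (g : Laur n A) : laurMap (RingHom.id A) g = g := by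
  rw [laurMap_eq_mapRingHom, mapRingHom_id, RingHom.id_apply]

lemma lmono_add (b b' : Fin n → ℤ) : (lmono (b + b') : Laur n A) = lmono b * lmono b' := by
  rw [lmono, lmono, lmono, single_mul_single, one_mul]

lemma lpderiv_single (j : Fin n) (m : Fin n → ℤ) (c : A) :
    lpderiv j (single m c) = single (m - Pi.single j 1) ((m j : A) * c) :=
  Finsupp.sum_single_index (by simp)

lemma lpderiv_add (j : Fin n) (g h : Laur n A) :
    lpderiv j (g + h) = lpderiv j g + lpderiv j h :=
  Finsupp.sum_add_index (by simp) (fun _ _ _ _ => by rw [mul_add, single_add])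

lemma laurMap_lpderiv (φ : A →+* B) (j : Fin n) (g : Laur n A) :
    laurMap φ (lpderiv j g) = lpderiv j (laurMap φ g) := by
  induction g using induction_linear with
  | zero => simp [lpderiv]
  | add p q hp hq => rw [lpderiv_add, map_add, map_add, lpderiv_add, hp, hq]
  | single m c => simp [lpderiv_single]

lemma exists_eq_single_mul_of_dvd_coeff {δ : A} (x : Laur n A) (h : ∀ m, δ ∣ x.coeff m) :
    ∃ y, x = single 0 δ * y := by
  choose c hc using h
  refine ⟨∑ m ∈ x.coeff.support, single m (c m), ?_⟩
  conv_lhs => rw [← sum_coeff_single x]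
  simp only [Finset.mul_sum, single_mul_single, zero_add, ← hc]
  rfl

end Laurent

section OXmap

variable {l n : ℕ} (f : Fin l → Laur n ℂ) {A B : Type} [CommRing A] [CommRing B]
  (κ₁ : KK l n →+* A) (κ₂ : KK l n →+* B) (θ : A →+* B)

lemma laurMap_fImg (hθ : θ.comp (cmap κ₁) = cmap κ₂) (i : Fin l) :
    laurMap θ (fImg f κ₁ i) = fImg f κ₂ i := by
  rw [fImg, laurMap_comp_apply, hθ, fImg]

variable (hθ : θ.comp (cmap κ₁) = cmap κ₂)

lemma OXmap_algebraMap (g : Laur n A) :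
    OXmap f κ₁ κ₂ θ hθ (algebraMap _ _ g) = algebraMap _ _ (laurMap θ g) := by
  rw [OXmap, Localization.awayLift]
  exact IsLocalization.Away.lift_eq _ _ g

lemma OXmap_algebraMap_scalar (a : A) :
    OXmap f κ₁ κ₂ θ hθ (algebraMap A _ a) = algebraMap B _ (θ a) := by
  rw [IsScalarTower.algebraMap_apply A (Laur n A), OXmap_algebraMap,
    IsScalarTower.algebraMap_apply B (Laur n B), coe_algebraMap, coe_algebraMap]
  simp

lemma OXmap_smul (a : A) (z : OX f κ₁) :
    OXmap f κ₁ κ₂ θ hθ (a • z) = θ a • OXmap f κ₁ κ₂ θ hθ z := by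
  rw [Algebra.smul_def, map_mul, OXmap_algebraMap_scalar, ← Algebra.smul_def]

def OXmapₛₗ : OX f κ₁ →ₛₗ[θ] OX f κ₂ where
  toFun := OXmap f κ₁ κ₂ θ hθ
  map_add' := map_add _
  map_smul' := OXmap_smul f κ₁ κ₂ θ hθ

lemma units_map_OXmap_xU (j : Fin n) :
    Units.map (OXmap f κ₁ κ₂ θ hθ : OX f κ₁ →* OX f κ₂) (xU f κ₁ j) = xU f κ₂ j := by
  ext
  simp [xU, OXmap_algebraMap]

lemma OXmap_xU_inv (j : Fin n) :
    OXmap f κ₁ κ₂ θ hθ ↑(xU f κ₁ j)⁻¹ = ↑(xU f κ₂ j)⁻¹ :=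
  congrArg (fun u => ((u⁻¹ : (OX f κ₂)ˣ) : OX f κ₂)) (units_map_OXmap_xU f κ₁ κ₂ θ hθ j)

lemma units_map_OXmap_fU (i : Fin l) :
    Units.map (OXmap f κ₁ κ₂ θ hθ : OX f κ₁ →* OX f κ₂) (fU f κ₁ i) = fU f κ₂ i := by
  ext
  simp [fU, OXmap_algebraMap, laurMap_fImg f κ₁ κ₂ θ hθ]

lemma OXmap_fU_inv (i : Fin l) :
    OXmap f κ₁ κ₂ θ hθ ↑(fU f κ₁ i)⁻¹ = ↑(fU f κ₂ i)⁻¹ :=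
  congrArg (fun u => ((u⁻¹ : (OX f κ₂)ˣ) : OX f κ₂)) (units_map_OXmap_fU f κ₁ κ₂ θ hθ i)

lemma OXmap_fpow (a : Fin l → ℤ) :
    OXmap f κ₁ κ₂ θ hθ (fpow f κ₁ a) = fpow f κ₂ a := by
  change ((Units.map (OXmap f κ₁ κ₂ θ hθ : OX f κ₁ →* OX f κ₂) _ : (OX f κ₂)ˣ) : OX f κ₂) = _
  simp only [map_prod, map_zpow, units_map_OXmap_fU f κ₁ κ₂ θ hθ]
  rfl

lemma OXmap_vElt (hκ : θ.comp κ₁ = κ₂) (δ : A) (a : Fin l → ℤ) (b : Fin n → ℤ) (j : Fin n) :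
    OXmap f κ₁ κ₂ θ hθ (vElt f κ₁ δ a b j) = vElt f κ₂ (θ δ) a b j := by
  have hκ' (c : KK l n) : θ (κ₁ c) = κ₂ c := by rw [← hκ, RingHom.comp_apply]
  simp only [vElt, map_mul, map_sub, map_sum, map_add, OXmap_algebraMap,
    OXmap_algebraMap_scalar, OXmap_fpow, OXmap_xU_inv, OXmap_fU_inv, laurMap_lmono,
    laurMap_lpderiv, laurMap_fImg f κ₁ κ₂ θ hθ, map_intCast, hκ']

lemma OXmap_leftInverse (θ' : B →+* A) (hθ' : θ'.comp (cmap κ₂) = cmap κ₁)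
    (hinv : θ'.comp θ = RingHom.id A) :
    Function.LeftInverse (OXmap f κ₂ κ₁ θ' hθ') (OXmap f κ₁ κ₂ θ hθ) := by
  have h : (OXmap f κ₂ κ₁ θ' hθ').comp (OXmap f κ₁ κ₂ θ hθ) = RingHom.id _ :=
    IsLocalization.ringHom_ext (Submonoid.powers (FProd f κ₁)) <| RingHom.ext fun g => by
      simp [OXmap_algebraMap, laurMap_comp_apply, hinv]
  exact RingHom.congr_fun h

end OXmap

section Span

variable {l n : ℕ} (f : Fin l → Laur n ℂ) {A : Type} [CommRing A] (κ : KK l n →+* A)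

/-- `x₁⋯xₙ · f^a · x^b`, the prefactor in `v_{a,b,j}`. -/
def xfMonomial (a : Fin l → ℤ) (b : Fin n → ℤ) : OX f κ :=
  algebraMap (Laur n A) (OX f κ) (lmono fun _ => 1) * fpow f κ a *
    algebraMap (Laur n A) (OX f κ) (lmono b)

lemma algebraMap_lmono_mul_fpow (m : Fin n → ℤ) (a : Fin l → ℤ) :
    algebraMap (Laur n A) (OX f κ) (lmono m) * fpow f κ a =
      xfMonomial f κ a (m - fun _ => 1) := by
  rw [xfMonomial, ← sub_add_cancel m (fun _ => 1), lmono_add, map_mul, add_sub_cancel_right]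
  ring

lemma fpow_neg_mul_FProd_pow (k : ℕ) :
    fpow f κ (fun _ => -(k : ℤ)) * algebraMap (Laur n A) (OX f κ) (FProd f κ ^ k) = 1 := by
  have hF : algebraMap (Laur n A) (OX f κ) (FProd f κ) = ↑(∏ i, fU f κ i) := by
    change algebraMap _ _ (∏ i, fImg f κ i) = _
    rw [Units.coe_prod, map_prod]
    exact Finset.prod_congr rfl fun i _ => (fImg_isUnit f κ i).unit_spec.symm
  have hfpow : fpow f κ (fun _ => -(k : ℤ)) = ↑((∏ i, fU f κ i) ^ k)⁻¹ := by
    simp [fpow, zpow_neg, Finset.prod_inv_distrib, Finset.prod_pow]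
  rw [hfpow, map_pow, hF, ← Units.val_pow_eq_pow_val, Units.inv_mul]

lemma algebraMap_mul_fpow_mem_span (x : Laur n A) (a : Fin l → ℤ) :
    algebraMap (Laur n A) (OX f κ) x * fpow f κ a ∈
      Submodule.span A (Set.range (Function.uncurry (xfMonomial f κ))) := by
  induction x using induction_linear with
  | zero => simp
  | add p q hp hq => rw [map_add, add_mul]; exact add_mem hp hq
  | single m c =>
      rw [show (single m c : Laur n A) = c • lmono m by rw [lmono, smul_single', mul_one],
        Algebra.smul_def, map_mul, ← IsScalarTower.algebraMap_apply, mul_assoc,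
        ← Algebra.smul_def]
      exact Submodule.smul_mem _ _
        (Submodule.subset_span ⟨(a, _), (algebraMap_lmono_mul_fpow f κ m a).symm⟩)

lemma span_range_xfMonomial :
    Submodule.span A (Set.range (Function.uncurry (xfMonomial f κ))) = ⊤ := by
  refine Submodule.eq_top_iff'.2 fun r => ?_
  obtain ⟨⟨x, s⟩, hx⟩ := IsLocalization.surj (Submonoid.powers (FProd f κ)) r
  obtain ⟨k, hk⟩ := s.2
  have hr : r = algebraMap (Laur n A) (OX f κ) x * fpow f κ (fun _ => -(k : ℤ)) := by
    rw [← hx, ← hk, mul_comm r, mul_assoc, mul_comm r, ← mul_assoc, mul_comm _ (fpow _ _ _),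
      fpow_neg_mul_FProd_pow, one_mul]
  rw [hr]
  exact algebraMap_mul_fpow_mem_span f κ x _

end Span

lemma exists_eq_single_X_mul_of_laurMap_constantCoeff_eq_zero {n : ℕ} {R : Type}
    [CommRing R] {x : Laur n (PowerSeries R)} (hx : laurMap PowerSeries.constantCoeff x = 0) :
    ∃ y, x = single 0 PowerSeries.X * y :=
  exists_eq_single_mul_of_dvd_coeff x fun m => PowerSeries.X_dvd_iff.2 <| by
    simpa [laurMap_eq_mapRingHom] using congrArg (fun g => g.coeff m) hx

instance {R : Type} [CommRing R] : RingHomSurjective (PowerSeries.constantCoeff (R := R)) :=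
  ⟨fun a => ⟨PowerSeries.C a, PowerSeries.constantCoeff_C a⟩⟩

section Reduction

variable {l n : ℕ} (f : Fin l → Laur n ℂ)

abbrev redₛₗ : OXd f →ₛₗ[PowerSeries.constantCoeff (R := KK l n)] OXK f :=
  OXmapₛₗ f _ _ _ (redCompat l n)

lemma red_surjective : Function.Surjective (red f) :=
  (OXmap_leftInverse f (RingHom.id _) PowerSeries.C PowerSeries.C (RingHom.ext fun _ => rfl) _
    (redCompat l n) (RingHom.ext PowerSeries.constantCoeff_C)).surjective

lemma red_algebraMap (c : KK l n) :
    red f (algebraMap (KK l n) (OXd f) c) = algebraMap (KK l n) (OXK f) c := by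
  rw [IsScalarTower.algebraMap_apply (KK l n) (PS l n) (OXd f), red,
    OXmap_algebraMap_scalar, PowerSeries.algebraMap_apply]
  simp

lemma vElt_id_zero (a : Fin l → ℤ) (b : Fin n → ℤ) (j : Fin n) :
    vElt f (RingHom.id (KK l n)) 0 a b j = xfMonomial f _ a b * wElt f j := by
  simp [vElt, wElt, xfMonomial]

lemma red_vElt (a : Fin l → ℤ) (b : Fin n → ℤ) (j : Fin n) :
    red f (vElt f PowerSeries.C PowerSeries.X a b j) = xfMonomial f _ a b * wElt f j := by
  rw [red, OXmap_vElt (hκ := RingHom.ext PowerSeries.constantCoeff_C),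
    PowerSeries.constantCoeff_X, vElt_id_zero]

lemma mem_deltaMod_iff {g : OXd f} :
    g ∈ deltaMod f ↔ ∃ h, g = algebraMap (PS l n) (OXd f) PowerSeries.X * h := by
  refine ⟨fun hg => ?_, fun hg => Submodule.subset_span hg⟩
  induction hg using Submodule.span_induction with
  | mem g hg => exact hg
  | zero => exact ⟨0, (mul_zero _).symm⟩
  | add g g' _ _ hg hg' =>
      obtain ⟨⟨h, rfl⟩, ⟨h', rfl⟩⟩ := And.intro hg hg'
      exact ⟨h + h', (mul_add _ _ _).symm⟩
  | smul p g _ hg =>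
      obtain ⟨h, rfl⟩ := hg
      exact ⟨p • h, (mul_smul_comm _ _ _).symm⟩

lemma exists_FProd_pow_mul_eq_single_X_mul {x : Laur n (PS l n)}
    (hx : red f (algebraMap _ _ x) = 0) :
    ∃ j y, FProd f PowerSeries.C ^ j * x = single 0 PowerSeries.X * y := by
  rw [red, OXmap_algebraMap] at hx
  obtain ⟨⟨_, j, rfl⟩, hj⟩ :=
    (IsLocalization.map_eq_zero_iff (Submonoid.powers (FProd f (RingHom.id _))) _ _).1 hx
  refine ⟨j, exists_eq_single_X_mul_of_laurMap_constantCoeff_eq_zero ?_⟩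
  rwa [map_mul, map_pow, laurMap_FProd f _ _ _ (redCompat l n)]

lemma ker_redₛₗ : LinearMap.ker (redₛₗ f) = deltaMod f := by
  refine le_antisymm (fun z hz => ?_) fun z hz => ?_
  · change red f z = 0 at hz
    obtain ⟨⟨x, ⟨_, k, rfl⟩⟩, hx⟩ :=
      IsLocalization.surj (Submonoid.powers (FProd f PowerSeries.C)) z
    obtain ⟨j, y, hy⟩ := exists_FProd_pow_mul_eq_single_X_mul f (x := x) <| by
      rw [← hx, map_mul, hz, zero_mul]
    have hu : IsUnit (algebraMap _ (OXd f) (FProd f PowerSeries.C ^ (j + k))) := by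
      rw [map_pow]
      exact (IsLocalization.Away.algebraMap_isUnit _).pow _
    refine (mem_deltaMod_iff f).2 ⟨algebraMap _ _ y * ↑hu.unit⁻¹, ?_⟩
    rw [← mul_assoc, Units.eq_mul_inv_iff_mul_eq, IsUnit.unit_spec, pow_add, map_mul,
      mul_left_comm, hx, ← map_mul, hy, map_mul,
      IsScalarTower.algebraMap_apply (PS l n) (Laur n (PS l n)) (OXd f), coe_algebraMap]
    rfl
  · obtain ⟨h, rfl⟩ := (mem_deltaMod_iff f).1 hz
    change red f _ = 0
    rw [map_mul, red, OXmap_algebraMap_scalar, PowerSeries.constantCoeff_X, map_zero, zero_mul]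

lemma map_redₛₗ_Vd : (Vd f).map (redₛₗ f) = (likeIdeal f).restrictScalars (KK l n) := by
  rw [likeIdeal, ← Submodule.span_smul_of_span_eq_top (span_range_xfMonomial f _), Vd, VA,
    Submodule.map_span]
  congr 1
  ext g
  simp only [Set.mem_image, Set.mem_ofPred_eq, Set.mem_smul, Set.mem_range, Prod.exists,
    Function.uncurry_apply_pair]
  constructor
  · rintro ⟨_, ⟨a, b, j, rfl⟩, rfl⟩
    exact ⟨_, ⟨a, b, rfl⟩, _, ⟨j, rfl⟩, (red_vElt f a b j).symm⟩
  · rintro ⟨_, ⟨a, b, rfl⟩, _, ⟨j, rfl⟩, rfl⟩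
    exact ⟨_, ⟨a, b, j, rfl⟩, red_vElt f a b j⟩

end Reduction

theorem stmt5_general {l n : ℕ} (f : Fin l → Laur n ℂ) :
    Function.Surjective (red f) ∧
    (∀ c : KK l n, red f (algebraMap (KK l n) (OXd f) c) =
        algebraMap (KK l n) (OXK f) c) ∧
    (∀ g : OXd f, red f g ∈ likeIdeal f ↔ g ∈ Vd f ⊔ deltaMod f) := by
  refine ⟨red_surjective f, red_algebraMap f, fun g => ?_⟩
  change redₛₗ f g ∈ (likeIdeal f).restrictScalars (KK l n) ↔ _
  rw [← map_redₛₗ_Vd, ← Submodule.mem_comap, Submodule.comap_map_eq, ker_redₛₗ]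

theorem stmt5 {l n : ℕ} (hn : 1 ≤ n) (hl : 1 ≤ l)
    (f : Fin l → Laur n ℂ) (hf : ∀ i, f i ≠ 0) :
    Function.Surjective (red f) ∧
    (∀ c : KK l n, red f (algebraMap (KK l n) (OXd f) c) =
        algebraMap (KK l n) (OXK f) c) ∧
    (∀ g : OXd f, red f g ∈ likeIdeal f ↔ g ∈ Vd f ⊔ deltaMod f) :=
  stmt5_general f

end
end
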